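/- Quasi-shuffle identity for single letters: for every d-dimensional real time series x of length T, all letters a, b ∈ ℕ^d (each with at least one nonzero entry), and all 0 ≤ s ≤ t ≤ T, the product of two first-level ISS coefficients satisfies ⟨[a], ISS_{s,t}(x)⟩ · ⟨[b], ISS_{s,t}(x)⟩ = ⟨[a][b], ISS_{s,t}(x)⟩ + ⟨[b][a], ISS_{s,t}(x)⟩ + ⟨[a+b], ISS_{s,t}(x)⟩, where a+b is the componentwise sum of letters. -/
import Mathlib


/-- The monomial `x_t^{[a]} = ∏_j (x_t^{(j)})^{a_j}`. -/
def mono {d : ℕ} (x : ℕ → Fin d → ℝ) (t : ℕ) (a : Fin d → ℕ) : ℝ :=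
  ∏ j, (x t j) ^ (a j)

/-- The iterated-sums signature coefficient
`⟨[a_1]⋯[a_p], ISS_{s,t}(x)⟩ = ∑_{s < t_1 < ⋯ < t_p ≤ t} x_{t_1}^{[a_1]} ⋯ x_{t_p}^{[a_p]}`. -/
def iss {d : ℕ} (x : ℕ → Fin d → ℝ) : List (Fin d → ℕ) → ℕ → ℕ → ℝ
  | [], _, _ => 1
  | a :: w, s, t => ∑ i ∈ Finset.Ioc s t, mono x i a * iss x w i t

lemma mono_add {d : ℕ} (x : ℕ → Fin d → ℝ) (t : ℕ) (a b : Fin d → ℕ) :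
    mono x t (a + b) = mono x t a * mono x t b := by
  simp [mono, pow_add, Finset.prod_mul_distrib]

/-- Quasi-shuffle identity for single letters: for letters `a, b ∈ ℕ^d` (each with at
least one nonzero entry) and `0 ≤ s ≤ t ≤ T`,
`⟨[a], ISS_{s,t}(x)⟩ · ⟨[b], ISS_{s,t}(x)⟩
  = ⟨[a][b], ISS_{s,t}(x)⟩ + ⟨[b][a], ISS_{s,t}(x)⟩ + ⟨[a+b], ISS_{s,t}(x)⟩`. -/
theorem iss_quasi_shuffle_letters {d T : ℕ} (x : ℕ → Fin d → ℝ)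
    (a b : Fin d → ℕ) (ha : ∃ j, a j ≠ 0) (hb : ∃ j, b j ≠ 0)
    (s t : ℕ) (hst : s ≤ t) (htT : t ≤ T) :
    iss x [a] s t * iss x [b] s t
      = iss x [a, b] s t + iss x [b, a] s t + iss x [a + b] s t := by
  simp only [iss, mul_one]
  rw [Finset.sum_mul_sum]
  have hsplit : ∀ i ∈ Finset.Ioc s t,
      ∑ j ∈ Finset.Ioc s t, mono x i a * mono x j b
        = ((∑ j ∈ Finset.Ioc i t, mono x i a * mono x j b)
          + (∑ j ∈ Finset.Ioo s i, mono x i a * mono x j b))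
          + mono x i a * mono x i b := by
    intro i hi
    simp only [Finset.mem_Ioc] at hi
    rw [← Finset.Ioc_union_Ioc_eq_Ioc (le_of_lt hi.1) hi.2,
      Finset.sum_union (Finset.disjoint_left.mpr (by intro k hk hk'; simp only [Finset.mem_Ioc] at hk hk'; omega)),
      ← Finset.Ioo_insert_right hi.1, Finset.sum_insert (by simp)]
    ring
  rw [Finset.sum_congr rfl hsplit, Finset.sum_add_distrib, Finset.sum_add_distrib]
  congr 1
  · congr 1
    · exact Finset.sum_congr rfl fun i _ => by rw [Finset.mul_sum]
    · rw [Finset.sum_comm' (t := fun i => Finset.Ioo s i) (t' := Finset.Ioc s t)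
        (s' := fun j => Finset.Ioc j t) (by
          intro i j
          simp only [Finset.mem_Ioc, Finset.mem_Ioo]
          omega)]
      exact Finset.sum_congr rfl fun j _ => by
        rw [Finset.mul_sum]; exact Finset.sum_congr rfl fun i _ => mul_comm _ _
  · exact Finset.sum_congr rfl fun i _ => (mono_add x i a b).symm
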